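/- Let G ≅ ⟨x | y⟩ be a ball with x, y and G numbers and x < y, and suppose G is balanced, i.e. G + G = x + y as values. If the value of G is a nonzero dyadic rational a/2^p, where either p = 0 and a is a nonzero integer, or p ≥ 1 and a is an odd integer, then as values y − x ≤ 2/2^p; equivalently, the radius Δ = (x − y)/2 satisfies −1/2^p ≤ Δ < 0. -/

import Mathlib

universe v

namespace SetTheory

/-- Pre-games (formerly `SetTheory.PGame` in Mathlib), with their old definition. -/
inductive PGame : Type (v + 1)
  | mk : ∀ α β : Type v, (α → PGame) → (β → PGame) → PGame

namespace PGame

def LeftMoves : PGame → Type v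
  | mk l _ _ _ => l

def RightMoves : PGame → Type v
  | mk _ r _ _ => r

def moveLeft : ∀ g : PGame, LeftMoves g → PGame
  | mk _ _ L _ => L

def moveRight : ∀ g : PGame, RightMoves g → PGame
  | mk _ _ _ R => R

/-- The pair (`x ≤ y`, `x ⧏ y`), defined by the old mutual recursion. -/
noncomputable def leLf (x : PGame.{v}) : PGame.{v} → Prop × Prop :=
  PGame.rec (motive := fun _ => PGame.{v} → Prop × Prop)
    (fun _ _ _ _ IHxl IHxr y =>
      PGame.rec (motive := fun _ => Prop × Prop)
        (fun yl yr yL yR IHyl IHyr =>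
          ((∀ i, (IHxl i (mk yl yr yL yR)).2) ∧ ∀ j, (IHyr j).2,
           (∃ i, (IHyl i).1) ∨ ∃ j, (IHxr j (mk yl yr yL yR)).1))
        y) x

noncomputable instance : LE PGame := ⟨fun x y => (leLf x y).1⟩

noncomputable def LF (x y : PGame) : Prop := (leLf x y).2

noncomputable instance : LT PGame := ⟨fun x y => x ≤ y ∧ LF x y⟩

def Numeric : PGame → Prop
  | ⟨_, _, L, R⟩ => (∀ i j, L i < R j) ∧ (∀ i, Numeric (L i)) ∧ ∀ j, Numeric (R j)

instance : Zero PGame := ⟨⟨PEmpty, PEmpty, PEmpty.elim, PEmpty.elim⟩⟩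

instance : One PGame := ⟨⟨PUnit, PEmpty, fun _ => 0, PEmpty.elim⟩⟩

def neg : PGame → PGame
  | ⟨l, r, L, R⟩ => ⟨r, l, fun i => neg (R i), fun i => neg (L i)⟩

instance : Neg PGame := ⟨neg⟩

noncomputable def add (x : PGame.{v}) : PGame.{v} → PGame.{v} :=
  PGame.rec (motive := fun _ => PGame.{v} → PGame.{v})
    (fun xl xr _ _ IHxl IHxr y =>
      PGame.rec (motive := fun _ => PGame.{v})
        (fun yl yr yL yR IHyl IHyr =>
          mk (xl ⊕ yl) (xr ⊕ yr) (Sum.elim (fun i => IHxl i (mk yl yr yL yR)) IHyl)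
            (Sum.elim (fun i => IHxr i (mk yl yr yL yR)) IHyr))
        y) x

noncomputable instance : Add PGame := ⟨add⟩

noncomputable def Equiv (x y : PGame) : Prop := x ≤ y ∧ y ≤ x

noncomputable instance setoid : Setoid PGame := Relation.EqvGen.setoid Equiv

def powHalf : ℕ → PGame
  | 0 => 1
  | n + 1 => ⟨PUnit, PUnit, fun _ => 0, fun _ => powHalf n⟩

end PGame

abbrev Game : Type (v + 1) := Quotient PGame.setoid

namespace Game

noncomputable instance : Zero Game := ⟨⟦0⟧⟩

noncomputable instance : Add Game := ⟨fun g h => ⟦g.out + h.out⟧⟩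

noncomputable instance : Neg Game := ⟨fun g => ⟦-g.out⟧⟩

noncomputable instance : Sub Game := ⟨fun g h => g + -h⟩

noncomputable instance : LE Game := ⟨fun g h => g.out ≤ h.out⟩

noncomputable def nsm : ℕ → Game → Game
  | 0, _ => 0
  | n + 1, g => nsm n g + g

noncomputable instance : SMul ℤ Game := ⟨fun n g => match n with
  | Int.ofNat n => nsm n g
  | Int.negSucc n => -nsm (n + 1) g⟩

end Game

end SetTheory

open SetTheory PGame

universe u

/-- Ordinal sum `G : H`: players may move in the base `G` (ending all play in the
subordinate) or in the subordinate `H`. -/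
def ordinalSum (G : PGame.{u}) : PGame.{u} → PGame.{u}
  | ⟨yl, yr, yL, yR⟩ =>
    ⟨G.LeftMoves ⊕ yl, G.RightMoves ⊕ yr,
     Sum.elim G.moveLeft fun j => ordinalSum G (yL j),
     Sum.elim G.moveRight fun j => ordinalSum G (yR j)⟩

/-- `G ≜ H`: equivalence modulo domination.  Every Left option of `G` is `≤` some Left
option of `H`, every Left option of `H` is `≤` some Left option of `G`, every Right option
of `G` is `≥` some Right option of `H`, and every Right option of `H` is `≥` some Right
option of `G`. -/
def EquivDom (G H : PGame) : Prop :=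
  (∀ i, ∃ j, G.moveLeft i ≤ H.moveLeft j) ∧
  (∀ j, ∃ i, H.moveLeft j ≤ G.moveLeft i) ∧
  (∀ i, ∃ j, H.moveRight j ≤ G.moveRight i) ∧
  (∀ j, ∃ i, G.moveRight i ≤ H.moveRight j)

/-- The ball `⟨a | b⟩`: the game with exactly one Left option `a` and exactly one Right
option `b`. -/
def ball (a b : PGame.{u}) : PGame.{u} :=
  ⟨PUnit, PUnit, fun _ => a, fun _ => b⟩

/-- The canonical form of a natural number: `0 ≅ ⟨ | ⟩` and `n+1 ≅ ⟨n | ⟩`. -/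
def canonNat : ℕ → PGame
  | 0 => 0
  | n + 1 => ⟨PUnit, PEmpty, fun _ => canonNat n, PEmpty.elim⟩

/-- The canonical form of an integer: for `n ≥ 0` it is `canonNat n`, and the canonical
form of a negative integer is the negative of the canonical form of its absolute value. -/
def canonInt (n : ℤ) : PGame :=
  if 0 ≤ n then canonNat n.toNat else -canonNat (-n).toNat

/-- The game value of the dyadic rational `a / 2 ^ q`. -/
noncomputable def dyadicVal (a : ℤ) (q : ℕ) : Game :=
  a • (⟦powHalf q⟧ : Game)

/-!
Write `G = ⟨x | y⟩`. Balance says `y = 2G - x`, so the claim amounts to `(a - 1) / 2 ^ p ≤ x`.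
Suppose instead `x < (a - 1) / 2 ^ p`. By the simplicity theorem `G` is the simplest dyadic
strictly between `x` and `y`: one of least denominator, and among integers one closest to `0`.
If `p ≥ 1` the interval contains `(a - 1) / 2 ^ p = ((a - 1) / 2) / 2 ^ (p - 1)`, so `G` would
have denominator at most `2 ^ (p - 1)`, which is impossible for odd `a`. If `p = 0` the interval
contains `a - 1` and, by balance, `a + 1`; one of them is closer to `0` than `a`, so `G ≠ a`.

The simplicity theorem is applied to canonical forms of `k / 2 ^ q` whose options stay at distance
at least `1 / 2 ^ q`: `⟨n - 1 | ⟩` for naturals, their negatives, and for odd `k = 2 j + 1` the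
ball `⟨j / 2 ^ q | (j + 1) / 2 ^ q⟩` one level down.
-/

namespace SetTheory
namespace PGame

infix:50 " ⧏ " => LF

@[simp] theorem moveLeft_mk {xl xr : Type v} {xL : xl → PGame.{v}} {xR : xr → PGame.{v}} :
    (mk xl xr xL xR).moveLeft = xL := rfl

@[simp] theorem moveRight_mk {xl xr : Type v} {xL : xl → PGame.{v}} {xR : xr → PGame.{v}} :
    (mk xl xr xL xR).moveRight = xR := rfl

theorem le_iff_forall_lf {x y : PGame.{v}} :
    x ≤ y ↔ (∀ i, x.moveLeft i ⧏ y) ∧ ∀ j, x ⧏ y.moveRight j := by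
  cases x; cases y; exact Iff.rfl

theorem lf_iff_exists_le {x y : PGame.{v}} :
    x ⧏ y ↔ (∃ i, x ≤ y.moveLeft i) ∨ ∃ j, x.moveRight j ≤ y := by
  cases x; cases y; exact Iff.rfl

theorem not_le_iff_lf_and_not_le_iff_lf (x y : PGame.{v}) :
    (¬x ≤ y ↔ y ⧏ x) ∧ (¬y ≤ x ↔ x ⧏ y) := by
  induction x generalizing y with
  | mk xl xr xL xR IHxl IHxr =>
  induction y with
  | mk yl yr yL yR IHyl IHyr =>
  constructor <;> rw [le_iff_forall_lf, lf_iff_exists_le] <;>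
    simp only [moveLeft_mk, moveRight_mk, not_and_or, not_forall]
  · exact or_congr (exists_congr fun i => by rw [← (IHxl i _).2, not_not])
      (exists_congr fun j => by rw [← (IHyr j).2, not_not])
  · exact or_congr (exists_congr fun j => by rw [← (IHyl j).1, not_not])
      (exists_congr fun i => by rw [← (IHxr i _).1, not_not])

protected theorem not_le {x y : PGame.{v}} : ¬x ≤ y ↔ y ⧏ x :=
  (not_le_iff_lf_and_not_le_iff_lf x y).1

theorem not_lf {x y : PGame.{v}} : ¬x ⧏ y ↔ y ≤ x := by
  rw [← PGame.not_le, not_not]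

protected theorem le_refl (x : PGame.{v}) : x ≤ x := by
  induction x with
  | mk xl xr xL xR IHl IHr =>
  exact le_iff_forall_lf.2 ⟨fun i => lf_iff_exists_le.2 (Or.inl ⟨i, IHl i⟩),
    fun j => lf_iff_exists_le.2 (Or.inr ⟨j, IHr j⟩)⟩

theorem le_trans_aux {x y z : PGame.{v}}
    (h₁ : ∀ {i}, y ≤ z → z ≤ x.moveLeft i → y ≤ x.moveLeft i)
    (h₂ : ∀ {j}, z.moveRight j ≤ x → x ≤ y → z.moveRight j ≤ y) (hxy : x ≤ y) (hyz : y ≤ z) :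
    x ≤ z :=
  le_iff_forall_lf.2
    ⟨fun i => PGame.not_le.1 fun h => PGame.not_le.2 ((le_iff_forall_lf.1 hxy).1 i) (h₁ hyz h),
    fun j => PGame.not_le.1 fun h => PGame.not_le.2 ((le_iff_forall_lf.1 hyz).2 j) (h₂ h hxy)⟩

/-- The three rotations are proved together: the induction for each one calls the others on
options. -/
theorem le_trans_rotations (x y z : PGame.{v}) :
    (x ≤ y → y ≤ z → x ≤ z) ∧ (y ≤ z → z ≤ x → y ≤ x) ∧ (z ≤ x → x ≤ y → z ≤ y) := by
  induction x generalizing y z with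
  | mk xl xr xL xR IHxl IHxr =>
  induction y generalizing z with
  | mk yl yr yL yR IHyl IHyr =>
  induction z with
  | mk zl zr zL zR IHzl IHzr =>
  exact ⟨le_trans_aux (fun {i} => (IHxl i _ _).2.1) (fun {j} => (IHzr j).2.2),
    le_trans_aux (fun {i} => (IHyl i _).2.2) (fun {j} => (IHxr j _ _).1),
    le_trans_aux (fun {i} => (IHzl i).1) (fun {j} => (IHyr j _).2.1)⟩

noncomputable instance : Preorder PGame.{v} where
  le_refl := PGame.le_refl
  le_trans x y z := (le_trans_rotations x y z).1
  lt_iff_le_not_ge _ _ := and_congr_right fun _ => PGame.not_le.symm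

theorem lf_of_le_of_lf {x y z : PGame.{v}} (h₁ : x ≤ y) (h₂ : y ⧏ z) : x ⧏ z :=
  PGame.not_le.1 fun h => PGame.not_le.2 h₂ (h.trans h₁)

theorem lf_of_lf_of_le {x y z : PGame.{v}} (h₁ : x ⧏ y) (h₂ : y ≤ z) : x ⧏ z :=
  PGame.not_le.1 fun h => PGame.not_le.2 h₁ (h₂.trans h)

theorem moveLeft_lf {x : PGame.{v}} (i : x.LeftMoves) : x.moveLeft i ⧏ x :=
  lf_iff_exists_le.2 (Or.inl ⟨i, le_rfl⟩)

theorem lf_moveRight {x : PGame.{v}} (j : x.RightMoves) : x ⧏ x.moveRight j :=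
  lf_iff_exists_le.2 (Or.inr ⟨j, le_rfl⟩)

theorem eqvGen_equiv_iff {x y : PGame.{v}} : Relation.EqvGen PGame.Equiv x y ↔ x ≤ y ∧ y ≤ x := by
  refine ⟨fun h => ?_, Relation.EqvGen.rel (r := PGame.Equiv) x y⟩
  induction h with
  | rel _ _ h => exact h
  | refl => exact ⟨le_rfl, le_rfl⟩
  | symm _ _ _ ih => exact ih.symm
  | trans _ _ _ _ _ ih₁ ih₂ => exact ⟨ih₁.1.trans ih₂.1, ih₂.2.trans ih₁.2⟩

theorem mk_eq_mk_iff {x y : PGame.{v}} : (⟦x⟧ : Game.{v}) = ⟦y⟧ ↔ x ≤ y ∧ y ≤ x :=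
  Quotient.eq.trans eqvGen_equiv_iff

theorem mk_eq_of_le_of_le {x y : PGame.{v}} (h₁ : x ≤ y) (h₂ : y ≤ x) : (⟦x⟧ : Game.{v}) = ⟦y⟧ :=
  mk_eq_mk_iff.2 ⟨h₁, h₂⟩

theorem mk_le_mk {x y : PGame.{v}} : (⟦x⟧ : Game.{v}) ≤ ⟦y⟧ ↔ x ≤ y := by
  have hx := mk_eq_mk_iff.1 (Quotient.out_eq (⟦x⟧ : Game.{v}))
  have hy := mk_eq_mk_iff.1 (Quotient.out_eq (⟦y⟧ : Game.{v}))
  exact ⟨fun h => hx.2.trans (h.trans hy.1), fun h => hx.1.trans (h.trans hy.2)⟩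

theorem neg_le_lf_neg_iff (x y : PGame.{v}) : (-y ≤ -x ↔ x ≤ y) ∧ (-y ⧏ -x ↔ x ⧏ y) := by
  induction x generalizing y with
  | mk xl xr xL xR IHxl IHxr =>
  induction y with
  | mk yl yr yL yR IHyl IHyr =>
  constructor
  · rw [le_iff_forall_lf, le_iff_forall_lf]
    exact and_comm.trans (and_congr (forall_congr' fun i => (IHxl i _).2)
      (forall_congr' fun j => (IHyr j).2))
  · rw [lf_iff_exists_le, lf_iff_exists_le]
    exact or_comm.trans (or_congr (exists_congr fun j => (IHyl j).1)
      (exists_congr fun i => (IHxr i _).1))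

protected theorem neg_le_neg_iff {x y : PGame.{v}} : -y ≤ -x ↔ x ≤ y :=
  (neg_le_lf_neg_iff x y).1

protected theorem neg_lf_neg_iff {x y : PGame.{v}} : -y ⧏ -x ↔ x ⧏ y :=
  (neg_le_lf_neg_iff x y).2

protected theorem neg_lt_neg {x y : PGame.{v}} (h : x < y) : -y < -x :=
  ⟨PGame.neg_le_neg_iff.2 h.1, PGame.neg_lf_neg_iff.2 h.2⟩


theorem lf_add_of_le_moveLeft_add {x y z : PGame.{v}} {i : x.LeftMoves}
    (h : z ≤ x.moveLeft i + y) : z ⧏ x + y := by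
  cases x; cases y; exact lf_iff_exists_le.2 (Or.inl ⟨.inl i, h⟩)

theorem lf_add_of_le_add_moveLeft {x y z : PGame.{v}} {i : y.LeftMoves}
    (h : z ≤ x + y.moveLeft i) : z ⧏ x + y := by
  cases x; cases y; exact lf_iff_exists_le.2 (Or.inl ⟨.inr i, h⟩)

theorem add_lf_of_moveRight_add_le {x y z : PGame.{v}} {j : x.RightMoves}
    (h : x.moveRight j + y ≤ z) : x + y ⧏ z := by
  cases x; cases y; exact lf_iff_exists_le.2 (Or.inr ⟨.inl j, h⟩)

theorem add_lf_of_add_moveRight_le {x y z : PGame.{v}} {j : y.RightMoves}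
    (h : x + y.moveRight j ≤ z) : x + y ⧏ z := by
  cases x; cases y; exact lf_iff_exists_le.2 (Or.inr ⟨.inr j, h⟩)

theorem add_le_iff_forall_lf {x y z : PGame.{v}} :
    x + y ≤ z ↔ (∀ i, x.moveLeft i + y ⧏ z) ∧ (∀ i, x + y.moveLeft i ⧏ z) ∧
      ∀ k, x + y ⧏ z.moveRight k := by
  cases x; cases y; rw [le_iff_forall_lf]; exact (and_congr_left' Sum.forall).trans and_assoc

theorem le_add_iff_forall_lf {x y z : PGame.{v}} :
    z ≤ x + y ↔ (∀ k, z.moveLeft k ⧏ x + y) ∧ (∀ j, z ⧏ x.moveRight j + y) ∧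
      ∀ j, z ⧏ x + y.moveRight j := by
  cases x; cases y; rw [le_iff_forall_lf]; exact and_congr_right' Sum.forall

theorem add_le_add_iff_forall_lf {w x y z : PGame.{v}} :
    w + x ≤ y + z ↔ ((∀ i, w.moveLeft i + x ⧏ y + z) ∧ ∀ i, w + x.moveLeft i ⧏ y + z) ∧
      (∀ j, w + x ⧏ y.moveRight j + z) ∧ ∀ j, w + x ⧏ y + z.moveRight j := by
  cases w; cases x; cases y; cases z; rw [le_iff_forall_lf]; exact and_congr Sum.forall Sum.forall

theorem add_le_lf_add_right (x y z : PGame.{v}) :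
    (x ≤ y → x + z ≤ y + z) ∧ (x ⧏ y → x + z ⧏ y + z) := by
  induction x generalizing y z with
  | mk xl xr xL xR IHxl IHxr =>
  induction y generalizing z with
  | mk yl yr yL yR IHyl IHyr =>
  induction z with
  | mk zl zr zL zR IHzl IHzr =>
  refine ⟨fun h => le_iff_forall_lf.2 ⟨?_, ?_⟩, fun h => ?_⟩
  · rintro (i | k)
    · exact (IHxl i _ _).2 ((le_iff_forall_lf.1 h).1 i)
    · exact lf_of_le_of_lf ((IHzl k).1 h)
        (moveLeft_lf (x := mk yl yr yL yR + mk zl zr zL zR) (.inr k))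
  · rintro (j | k)
    · exact (IHyr j _).2 ((le_iff_forall_lf.1 h).2 j)
    · exact lf_of_lf_of_le (lf_moveRight (x := mk xl xr xL xR + mk zl zr zL zR) (.inr k))
        ((IHzr k).1 h)
  · rcases lf_iff_exists_le.1 h with ⟨i, hi⟩ | ⟨j, hj⟩
    · exact lf_iff_exists_le.2 (Or.inl ⟨.inl i, (IHyl i _).1 hi⟩)
    · exact lf_iff_exists_le.2 (Or.inr ⟨.inl j, (IHxr j _ _).1 hj⟩)

theorem add_comm_le (x y : PGame.{v}) : x + y ≤ y + x := by
  induction x generalizing y with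
  | mk xl xr xL xR IHxl IHxr =>
  induction y with
  | mk yl yr yL yR IHyl IHyr =>
  refine le_iff_forall_lf.2 ⟨?_, ?_⟩
  · rintro (i | j)
    · exact lf_iff_exists_le.2 (Or.inl ⟨.inr i, IHxl i _⟩)
    · exact lf_iff_exists_le.2 (Or.inl ⟨.inl j, IHyl j⟩)
  · rintro (j | i)
    · exact lf_iff_exists_le.2 (Or.inr ⟨.inr j, IHyr j⟩)
    · exact lf_iff_exists_le.2 (Or.inr ⟨.inl i, IHxr i _⟩)

protected theorem add_le_add_right {x y : PGame.{v}} (h : x ≤ y) (z : PGame.{v}) :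
    x + z ≤ y + z :=
  (add_le_lf_add_right x y z).1 h

protected theorem add_lf_add_right {x y : PGame.{v}} (h : x ⧏ y) (z : PGame.{v}) :
    x + z ⧏ y + z :=
  (add_le_lf_add_right x y z).2 h

protected theorem add_le_add_left {y z : PGame.{v}} (h : y ≤ z) (x : PGame.{v}) :
    x + y ≤ x + z :=
  (add_comm_le x y).trans ((PGame.add_le_add_right h x).trans (add_comm_le z x))

protected theorem add_lf_add_left {y z : PGame.{v}} (h : y ⧏ z) (x : PGame.{v}) :
    x + y ⧏ x + z :=
  lf_of_le_of_lf (add_comm_le x y) (lf_of_lf_of_le (PGame.add_lf_add_right h x) (add_comm_le z x))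

protected theorem add_lt_add_right {x y : PGame.{v}} (h : x < y) (z : PGame.{v}) :
    x + z < y + z :=
  ⟨PGame.add_le_add_right h.1 z, PGame.add_lf_add_right h.2 z⟩

protected theorem add_lt_add_left {y z : PGame.{v}} (h : y < z) (x : PGame.{v}) :
    x + y < x + z :=
  ⟨PGame.add_le_add_left h.1 x, PGame.add_lf_add_left h.2 x⟩

theorem add_assoc_le_and_le (x y z : PGame.{v}) :
    x + y + z ≤ x + (y + z) ∧ x + (y + z) ≤ x + y + z := by
  induction x generalizing y z with
  | mk xl xr xL xR IHxl IHxr =>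
  induction y generalizing z with
  | mk yl yr yL yR IHyl IHyr =>
  induction z with
  | mk zl zr zL zR IHzl IHzr =>
  refine ⟨le_iff_forall_lf.2 ⟨?_, ?_⟩, le_iff_forall_lf.2 ⟨?_, ?_⟩⟩
  · rintro ((i | j) | k)
    · exact lf_iff_exists_le.2 (Or.inl ⟨.inl i, (IHxl i _ _).1⟩)
    · exact lf_iff_exists_le.2 (Or.inl ⟨.inr (.inl j), (IHyl j _).1⟩)
    · exact lf_iff_exists_le.2 (Or.inl ⟨.inr (.inr k), (IHzl k).1⟩)
  · rintro (i | (j | k))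
    · exact lf_iff_exists_le.2 (Or.inr ⟨.inl (.inl i), (IHxr i _ _).1⟩)
    · exact lf_iff_exists_le.2 (Or.inr ⟨.inl (.inr j), (IHyr j _).1⟩)
    · exact lf_iff_exists_le.2 (Or.inr ⟨.inr k, (IHzr k).1⟩)
  · rintro (i | (j | k))
    · exact lf_iff_exists_le.2
        (Or.inl ⟨.inl (.inl i), (IHxl i (mk yl yr yL yR) (mk zl zr zL zR)).2⟩)
    · exact lf_iff_exists_le.2 (Or.inl ⟨.inl (.inr j), (IHyl j (mk zl zr zL zR)).2⟩)
    · exact lf_iff_exists_le.2 (Or.inl ⟨.inr k, (IHzl k).2⟩)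
  · rintro ((i | j) | k)
    · exact lf_iff_exists_le.2
        (Or.inr ⟨.inl i, (IHxr i (mk yl yr yL yR) (mk zl zr zL zR)).2⟩)
    · exact lf_iff_exists_le.2 (Or.inr ⟨.inr (.inl j), (IHyr j (mk zl zr zL zR)).2⟩)
    · exact lf_iff_exists_le.2 (Or.inr ⟨.inr (.inr k), (IHzr k).2⟩)

theorem add_zero_le_and_le (x : PGame.{v}) : x + 0 ≤ x ∧ x ≤ x + 0 := by
  induction x with
  | mk xl xr xL xR IHl IHr =>
  refine ⟨le_iff_forall_lf.2 ⟨?_, ?_⟩, le_iff_forall_lf.2 ⟨?_, ?_⟩⟩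
  · rintro (i | i)
    · exact lf_of_le_of_lf (IHl i).1 (moveLeft_lf (x := mk xl xr xL xR) i)
    · exact i.elim
  · exact fun j => lf_iff_exists_le.2 (Or.inr ⟨.inl j, (IHr j).1⟩)
  · exact fun i => lf_iff_exists_le.2 (Or.inl ⟨.inl i, (IHl i).2⟩)
  · rintro (j | j)
    · exact lf_of_lf_of_le (lf_moveRight (x := mk xl xr xL xR) j) (IHr j).2
    · exact j.elim

theorem neg_add_le_and_le (x : PGame.{v}) : -x + x ≤ 0 ∧ 0 ≤ -x + x := by
  induction x with
  | mk xl xr xL xR IHl IHr =>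
  refine ⟨le_iff_forall_lf.2 ⟨?_, nofun⟩, le_iff_forall_lf.2 ⟨nofun, ?_⟩⟩
  · rintro (j | i)
    · exact add_lf_of_add_moveRight_le (y := mk xl xr xL xR) (j := j) (IHr j).1
    · exact add_lf_of_moveRight_add_le (x := -mk xl xr xL xR) (j := i) (IHl i).1
  · rintro (i | j)
    · exact lf_add_of_le_add_moveLeft (y := mk xl xr xL xR) (i := i) (IHl i).2
    · exact lf_add_of_le_moveLeft_add (x := -mk xl xr xL xR) (i := j) (IHr j).2

@[simp] theorem mk_add (x y : PGame.{v}) : (⟦x + y⟧ : Game.{v}) = ⟦x⟧ + ⟦y⟧ := by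
  have hx := mk_eq_mk_iff.1 (Quotient.out_eq (⟦x⟧ : Game.{v}))
  have hy := mk_eq_mk_iff.1 (Quotient.out_eq (⟦y⟧ : Game.{v}))
  exact mk_eq_of_le_of_le
    ((PGame.add_le_add_right hx.2 y).trans (PGame.add_le_add_left hy.2 _))
    ((PGame.add_le_add_right hx.1 _).trans (PGame.add_le_add_left hy.1 x))

@[simp] theorem mk_neg (x : PGame.{v}) : (⟦-x⟧ : Game.{v}) = -⟦x⟧ := by
  have hx := mk_eq_mk_iff.1 (Quotient.out_eq (⟦x⟧ : Game.{v}))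
  exact mk_eq_of_le_of_le (PGame.neg_le_neg_iff.2 hx.1) (PGame.neg_le_neg_iff.2 hx.2)

@[simp] theorem mk_zero : (⟦0⟧ : Game.{v}) = 0 := rfl

end PGame

namespace Game

open PGame

noncomputable instance : AddCommGroup Game.{v} where
  add_assoc a b c := Quotient.inductionOn₃ a b c fun x y z => by
    simpa only [← mk_add] using mk_eq_mk_iff.2 (add_assoc_le_and_le x y z)
  zero_add a := Quotient.inductionOn a fun x => by
    simpa only [← mk_add, ← mk_zero] using
      mk_eq_of_le_of_le ((add_comm_le 0 x).trans (add_zero_le_and_le x).1)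
        ((add_zero_le_and_le x).2.trans (add_comm_le x 0))
  add_zero a := Quotient.inductionOn a fun x => by
    simpa only [← mk_add, ← mk_zero] using mk_eq_mk_iff.2 (add_zero_le_and_le x)
  nsmul := nsm
  nsmul_zero _ := rfl
  nsmul_succ _ _ := rfl
  zsmul n g := n • g
  zsmul_zero' _ := rfl
  zsmul_succ' _ _ := rfl
  zsmul_neg' _ _ := rfl
  neg_add_cancel a := Quotient.inductionOn a fun x => by
    simpa only [← mk_add, ← mk_neg, ← mk_zero] using mk_eq_mk_iff.2 (neg_add_le_and_le x)
  add_comm a b := Quotient.inductionOn₂ a b fun x y => by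
    simpa only [← mk_add] using mk_eq_of_le_of_le (add_comm_le x y) (add_comm_le y x)

noncomputable instance : PartialOrder Game.{v} where
  le := (· ≤ ·)
  lt g h := g ≤ h ∧ ¬h ≤ g
  le_refl g := le_refl g.out
  le_trans _ _ _ := le_trans (α := PGame)
  le_antisymm g h h₁ h₂ := by
    rw [← Quotient.out_eq g, ← Quotient.out_eq h]
    exact mk_eq_of_le_of_le h₁ h₂

/-- Overrides Mathlib's `Quotient.instPreorder`, whose order is the transitive closure of `≤` on
representatives rather than the order of `Game`. -/
noncomputable instance : Preorder Game.{v} := PartialOrder.toPreorder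

instance : IsOrderedAddMonoid Game.{v} where
  add_le_add_left a b h c := by
    induction a using Quotient.inductionOn with | h x => ?_
    induction b using Quotient.inductionOn with | h y => ?_
    induction c using Quotient.inductionOn with | h z => ?_
    rw [← mk_add, ← mk_add]
    exact mk_le_mk.2 (PGame.add_le_add_right (mk_le_mk.1 h) z)

end Game

namespace PGame

theorem mk_lt_mk {x y : PGame.{v}} : (⟦x⟧ : Game.{v}) < ⟦y⟧ ↔ x < y :=
  and_congr mk_le_mk ((not_congr mk_le_mk).trans PGame.not_le)


theorem lf_of_mk_lt {x y : PGame.{v}} (h : (⟦x⟧ : Game.{v}) < ⟦y⟧) : x ⧏ y :=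
  (mk_lt_mk.1 h).2

theorem Numeric.moveLeft {x : PGame.{v}} (o : Numeric x) (i : x.LeftMoves) :
    Numeric (x.moveLeft i) := by
  cases x; exact o.2.1 i

theorem Numeric.moveRight {x : PGame.{v}} (o : Numeric x) (j : x.RightMoves) :
    Numeric (x.moveRight j) := by
  cases x; exact o.2.2 j

theorem Numeric.left_lt_right {x : PGame.{v}} (o : Numeric x) (i : x.LeftMoves)
    (j : x.RightMoves) : x.moveLeft i < x.moveRight j := by
  cases x; exact o.1 i j

theorem numeric_zero : Numeric (0 : PGame.{v}) :=
  ⟨nofun, nofun, nofun⟩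

theorem Numeric.not_lf_of_lf {x y : PGame.{v}} (ox : Numeric x) (oy : Numeric y) (h : x ⧏ y) :
    ¬y ⧏ x := by
  induction x generalizing y with
  | mk xl xr xL xR IHl IHr =>
  intro h'
  rcases lf_iff_exists_le.1 h with ⟨i, hi⟩ | ⟨j, hj⟩ <;>
    rcases lf_iff_exists_le.1 h' with ⟨i', hi'⟩ | ⟨j', hj'⟩
  · exact IHl i' (ox.moveLeft i') (oy.moveLeft i)
      (lf_of_lf_of_le (moveLeft_lf i') hi) (lf_of_lf_of_le (moveLeft_lf i) hi')
  · exact PGame.not_le.2 (oy.left_lt_right i j').2 (hj'.trans hi)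
  · exact PGame.not_le.2 (ox.left_lt_right i' j).2 (hj.trans hi')
  · exact IHr j (ox.moveRight j) (oy.moveRight j')
      (lf_of_le_of_lf hj (lf_moveRight j')) (lf_of_le_of_lf hj' (lf_moveRight j))

theorem Numeric.lt_of_lf {x y : PGame.{v}} (ox : Numeric x) (oy : Numeric y) (h : x ⧏ y) :
    x < y :=
  ⟨not_lf.1 (ox.not_lf_of_lf oy h), h⟩

theorem Numeric.le_or_gt {x y : PGame.{v}} (ox : Numeric x) (oy : Numeric y) : x ≤ y ∨ y < x :=
  (em (x ≤ y)).imp_right fun h => oy.lt_of_lf ox (PGame.not_le.1 h)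

theorem Numeric.moveLeft_lt {x : PGame.{v}} (o : Numeric x) (i : x.LeftMoves) :
    x.moveLeft i < x :=
  (o.moveLeft i).lt_of_lf o (moveLeft_lf i)

theorem Numeric.lt_moveRight {x : PGame.{v}} (o : Numeric x) (j : x.RightMoves) :
    x < x.moveRight j :=
  o.lt_of_lf (o.moveRight j) (lf_moveRight j)

theorem Numeric.neg {x : PGame.{v}} (o : Numeric x) : Numeric (-x) := by
  induction x with
  | mk xl xr xL xR IHl IHr =>
  exact ⟨fun j i => PGame.neg_lt_neg (o.left_lt_right i j),
    fun j => IHr j (o.moveRight j), fun i => IHl i (o.moveLeft i)⟩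

theorem Numeric.add {x y : PGame.{v}} (ox : Numeric x) (oy : Numeric y) : Numeric (x + y) := by
  induction x generalizing y with
  | mk xl xr xL xR IHxl IHxr =>
  induction y with
  | mk yl yr yL yR IHyl IHyr =>
  refine ⟨?_, ?_, ?_⟩
  · rintro (i | i) (j | j)
    · exact PGame.add_lt_add_right (ox.left_lt_right i j) _
    · exact (PGame.add_lt_add_right (ox.moveLeft_lt i) _).trans
        (PGame.add_lt_add_left (oy.lt_moveRight j) _)
    · exact (PGame.add_lt_add_left (oy.moveLeft_lt i) _).trans
        (PGame.add_lt_add_right (ox.lt_moveRight j) _)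
    · exact PGame.add_lt_add_left (oy.left_lt_right i j) (mk xl xr xL xR)
  · rintro (i | i)
    · exact IHxl i (ox.moveLeft i) oy
    · exact IHyl i (oy.moveLeft i)
  · rintro (j | j)
    · exact IHxr j (ox.moveRight j) oy
    · exact IHyr j (oy.moveRight j)

@[simp] theorem powHalf_moveLeft (n : ℕ) (i : (powHalf.{v} n).LeftMoves) :
    (powHalf n).moveLeft i = 0 := by
  cases n <;> rfl

@[simp] theorem powHalf_succ_moveRight (n : ℕ) (j : (powHalf.{v} (n + 1)).RightMoves) :
    (powHalf (n + 1)).moveRight j = powHalf n := rfl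

theorem numeric_powHalf (n : ℕ) : Numeric (powHalf.{v} n) := by
  induction n with
  | zero => exact ⟨nofun, fun _ => numeric_zero, nofun⟩
  | succ n ih =>
    refine ⟨fun _ _ => (numeric_zero.lt_of_lf ih ?_), fun _ => numeric_zero, fun _ => ih⟩
    cases n <;> exact lf_iff_exists_le.2 (Or.inl ⟨PUnit.unit, le_rfl⟩)

theorem mk_powHalf_pos (n : ℕ) : (0 : Game.{v}) < ⟦powHalf n⟧ := by
  cases n with
  | zero => exact mk_lt_mk.2 ((numeric_powHalf 0).moveLeft_lt PUnit.unit)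
  | succ n => exact mk_lt_mk.2 ((numeric_powHalf (n + 1)).moveLeft_lt PUnit.unit)

theorem mk_powHalf_succ_add_self (n : ℕ) :
    (⟦powHalf.{v} (n + 1)⟧ : Game.{v}) + ⟦powHalf (n + 1)⟧ = ⟦powHalf n⟧ := by
  induction n using Nat.strong_induction_on with
  | _ n ih =>
  have hlt : (⟦powHalf.{v} (n + 1)⟧ : Game.{v}) < ⟦powHalf n⟧ :=
    mk_lt_mk.2 ((numeric_powHalf (n + 1)).lt_moveRight PUnit.unit)
  have hpos := mk_powHalf_pos.{v} (n + 1)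
  rw [← mk_add]
  refine mk_eq_of_le_of_le (add_le_iff_forall_lf.2 ⟨fun _ => ?_, fun _ => ?_, fun j => ?_⟩)
    (le_add_iff_forall_lf.2 ⟨fun _ => ?_, fun _ => ?_, fun _ => ?_⟩)
  · exact lf_of_mk_lt (by simpa using hlt)
  · exact lf_of_mk_lt (by simpa using hlt)
  · cases n with
    | zero => exact j.elim
    | succ m =>
      refine add_lf_of_moveRight_add_le (j := PUnit.unit) (mk_le_mk.1 ?_)
      calc (⟦powHalf.{v} (m + 1) + powHalf (m + 2)⟧ : Game.{v})
          ≤ ⟦powHalf (m + 1)⟧ + ⟦powHalf (m + 1)⟧ := by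
            rw [mk_add]; exact add_le_add le_rfl hlt.le
        _ = ⟦powHalf m⟧ := ih m m.lt_succ_self
  · exact lf_of_mk_lt (by simpa using add_pos hpos hpos)
  · exact lf_of_mk_lt (by simpa using hpos)
  · exact lf_of_mk_lt (by simpa using hpos)

end PGame

namespace Game

def numbers : AddSubgroup Game.{v} where
  carrier := {g | ∃ x : PGame.{v}, x.Numeric ∧ ⟦x⟧ = g}
  zero_mem' := ⟨0, PGame.numeric_zero, rfl⟩
  add_mem' := by
    rintro _ _ ⟨x, hx, rfl⟩ ⟨y, hy, rfl⟩
    exact ⟨x + y, hx.add hy, PGame.mk_add x y⟩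
  neg_mem' := by
    rintro _ ⟨x, hx, rfl⟩
    exact ⟨-x, hx.neg, PGame.mk_neg x⟩

theorem mk_mem_numbers {x : PGame.{v}} (hx : x.Numeric) : (⟦x⟧ : Game.{v}) ∈ numbers :=
  ⟨x, hx, rfl⟩

theorem le_or_gt_of_mem_numbers {g h : Game.{v}} (hg : g ∈ numbers) (hh : h ∈ numbers) :
    g ≤ h ∨ h < g := by
  obtain ⟨x, hx, rfl⟩ := hg
  obtain ⟨y, hy, rfl⟩ := hh
  exact (hx.le_or_gt hy).imp PGame.mk_le_mk.2 PGame.mk_lt_mk.2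

theorem eq_of_add_self_eq_add_self {g h : Game.{v}} (hg : g ∈ numbers) (hh : h ∈ numbers)
    (hgh : g + g = h + h) : g = h := by
  rcases le_or_gt_of_mem_numbers hg hh with hle | hlt
  · rcases hle.eq_or_lt with heq | hlt
    · exact heq
    · exact absurd hgh (add_lt_add hlt hlt).ne
  · exact absurd hgh (add_lt_add hlt hlt).ne'

end Game

end SetTheory

open Game

theorem dyadicVal_mem_numbers (a : ℤ) (q : ℕ) : dyadicVal a q ∈ Game.numbers :=
  AddSubgroup.zsmul_mem _ (mk_mem_numbers (numeric_powHalf q)) a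

theorem mk_powHalf_eq_two_pow_zsmul (q r : ℕ) :
    (⟦powHalf q⟧ : Game) = (2 ^ r : ℤ) • ⟦powHalf (q + r)⟧ := by
  induction r with
  | zero => simp
  | succ r ih =>
    rw [ih, ← Nat.add_assoc, ← mk_powHalf_succ_add_self, pow_succ, mul_zsmul, two_zsmul]

theorem dyadicVal_eq_zsmul (a : ℤ) (q r : ℕ) :
    dyadicVal a q = (a * 2 ^ r) • (⟦powHalf (q + r)⟧ : Game) := by
  rw [dyadicVal, mul_zsmul, ← mk_powHalf_eq_two_pow_zsmul]

theorem dyadicVal_eq_dyadicVal_iff {a b : ℤ} {q r : ℕ} :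
    dyadicVal a q = dyadicVal b r ↔ a * 2 ^ r = b * 2 ^ q := by
  rw [dyadicVal_eq_zsmul a q r, dyadicVal_eq_zsmul b r q, Nat.add_comm r q,
    zsmul_left_inj (mk_powHalf_pos _)]

theorem dyadicVal_le_dyadicVal_iff {a b : ℤ} {q : ℕ} :
    dyadicVal a q ≤ dyadicVal b q ↔ a ≤ b :=
  zsmul_le_zsmul_iff_left (mk_powHalf_pos q)

theorem dyadicVal_lt_dyadicVal_iff {a b : ℤ} {q : ℕ} :
    dyadicVal a q < dyadicVal b q ↔ a < b :=
  zsmul_lt_zsmul_iff_left (mk_powHalf_pos q)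

theorem dyadicVal_add (a b : ℤ) (q : ℕ) :
    dyadicVal a q + dyadicVal b q = dyadicVal (a + b) q :=
  (add_zsmul _ a b).symm

theorem dyadicVal_sub (a b : ℤ) (q : ℕ) :
    dyadicVal a q - dyadicVal b q = dyadicVal (a - b) q :=
  (sub_zsmul _ a b).symm

theorem dyadicVal_neg (a : ℤ) (q : ℕ) : -dyadicVal a q = dyadicVal (-a) q :=
  (neg_zsmul _ a).symm

theorem dyadicVal_two_mul_succ (a : ℤ) (q : ℕ) : dyadicVal (2 * a) (q + 1) = dyadicVal a q :=
  dyadicVal_eq_dyadicVal_iff.2 (by ring)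

theorem dyadicVal_ne_of_lt_of_odd {k a : ℤ} {q p : ℕ} (hqp : q < p) (ha : Odd a) :
    dyadicVal k q ≠ dyadicVal a p := by
  rw [Ne, dyadicVal_eq_dyadicVal_iff]
  obtain ⟨d, rfl⟩ := Nat.exists_eq_add_of_lt hqp
  intro h
  have : a = 2 * (k * 2 ^ d) := by
    apply mul_right_cancel₀ (pow_ne_zero q two_ne_zero)
    linear_combination -h
  exact Int.not_even_iff_odd.2 ha ⟨k * 2 ^ d, by omega⟩

theorem ball_neg (x y : PGame.{u}) : ball (-y) (-x) = -ball x y := rfl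

@[simp] theorem ball_moveLeft (x y : PGame.{u}) (i : (ball x y).LeftMoves) :
    (ball x y).moveLeft i = x := rfl

@[simp] theorem ball_moveRight (x y : PGame.{u}) (j : (ball x y).RightMoves) :
    (ball x y).moveRight j = y := rfl

theorem numeric_ball {x y : PGame.{u}} (hx : x.Numeric) (hy : y.Numeric) (h : x < y) :
    (ball x y).Numeric :=
  ⟨fun _ _ => h, fun _ => hx, fun _ => hy⟩

theorem mk_lt_mk_ball {x y : PGame.{u}} (hG : (ball x y).Numeric) :
    (⟦x⟧ : Game) < ⟦ball x y⟧ :=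
  mk_lt_mk.2 (hG.moveLeft_lt PUnit.unit)

theorem mk_ball_lt_mk {x y : PGame.{u}} (hG : (ball x y).Numeric) :
    (⟦ball x y⟧ : Game) < ⟦y⟧ :=
  mk_lt_mk.2 (hG.lt_moveRight PUnit.unit)

/-- Conway's simplicity theorem, for a ball. -/
theorem mk_ball_eq_of_lf {x y z : PGame.{u}} (hL : ∀ i, z.moveLeft i ≤ x)
    (hR : ∀ j, y ≤ z.moveRight j) (hxz : x ⧏ z) (hzy : z ⧏ y) :
    (⟦ball x y⟧ : Game) = ⟦z⟧ :=
  mk_eq_of_le_of_le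
    (le_iff_forall_lf.2 ⟨fun _ => hxz,
      fun j => lf_of_lf_of_le (lf_moveRight (x := ball x y) PUnit.unit) (hR j)⟩)
    (le_iff_forall_lf.2 ⟨fun i => lf_of_le_of_lf (hL i) (moveLeft_lf (x := ball x y) PUnit.unit),
      fun _ => hzy⟩)

/-- Canonical forms of `k / 2 ^ q`: their options keep a distance of at least `1 / 2 ^ q`, which
is what the simplicity theorem needs to identify a ball with them. -/
structure IsDyadicForm (z : PGame.{u}) (k : ℤ) (q : ℕ) : Prop where
  numeric : z.Numeric
  mk_eq : (⟦z⟧ : Game) = dyadicVal k q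
  moveLeft_le : ∀ i, (⟦z.moveLeft i⟧ : Game) ≤ dyadicVal (k - 1) q
  le_moveRight : ∀ j, dyadicVal (k + 1) q ≤ ⟦z.moveRight j⟧

@[simp] theorem canonNat_succ_moveLeft (n : ℕ) (i : (canonNat.{u} (n + 1)).LeftMoves) :
    (canonNat (n + 1)).moveLeft i = canonNat n := rfl

theorem isDyadicForm_canonNat (n : ℕ) : IsDyadicForm (canonNat.{u} n) n 0 := by
  induction n with
  | zero => exact ⟨numeric_zero, by rw [Nat.cast_zero, dyadicVal, zero_zsmul]; rfl, nofun, nofun⟩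
  | succ n ih =>
  have hno_right : IsEmpty (canonNat.{u} n).RightMoves := by
    cases n <;> exact PEmpty.instIsEmpty
  have hone := mk_powHalf_pos.{u} 0
  have hval : (⟦canonNat.{u} (n + 1)⟧ : Game) = ⟦canonNat n + powHalf 0⟧ := by
    refine mk_eq_of_le_of_le (le_add_iff_forall_lf.2 ⟨fun _ => ?_, isEmptyElim, nofun⟩)
      (add_le_iff_forall_lf.2 ⟨fun i => ?_, fun i => ?_, nofun⟩)
    · exact lf_of_mk_lt (by simpa using hone)
    · refine lf_of_le_of_lf (mk_le_mk.1 ?_) (moveLeft_lf (x := canonNat (n + 1)) PUnit.unit)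
      calc (⟦(canonNat n).moveLeft i + powHalf 0⟧ : Game)
          ≤ dyadicVal ((n : ℤ) - 1) 0 + dyadicVal 1 0 := by
            rw [mk_add]; exact add_le_add (ih.moveLeft_le i) (by simp [dyadicVal])
        _ = ⟦canonNat n⟧ := by rw [dyadicVal_add, ih.mk_eq, sub_add_cancel]
    · rw [powHalf_moveLeft]
      exact lf_of_le_of_lf (add_zero_le_and_le _).1 (moveLeft_lf (x := canonNat (n + 1)) PUnit.unit)
  refine ⟨⟨nofun, fun _ => ih.numeric, nofun⟩, ?_, fun _ => ?_, nofun⟩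
  · rw [hval, mk_add, ih.mk_eq, Nat.cast_succ, ← dyadicVal_add]
    simp [dyadicVal]
  · simpa using ih.mk_eq.le

namespace IsDyadicForm

theorem neg {z : PGame.{u}} {k : ℤ} {q : ℕ} (h : IsDyadicForm z k q) :
    IsDyadicForm (-z) (-k) q := by
  cases z with
  | mk zl zr zL zR =>
  refine ⟨h.numeric.neg, by rw [mk_neg, h.mk_eq, dyadicVal_neg], fun (j : zr) => ?_,
    fun (i : zl) => ?_⟩
  · change (⟦-zR j⟧ : Game) ≤ _
    rw [mk_neg, show -k - 1 = -(k + 1) by ring, ← dyadicVal_neg]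
    exact neg_le_neg (h.le_moveRight j)
  · change _ ≤ (⟦-zL i⟧ : Game)
    rw [mk_neg, show -k + 1 = -(k - 1) by ring, ← dyadicVal_neg]
    exact neg_le_neg (h.moveLeft_le i)

theorem double {z : PGame.{u}} {k : ℤ} {q : ℕ} (h : IsDyadicForm z k q) :
    IsDyadicForm z (2 * k) (q + 1) := by
  refine ⟨h.numeric, by rw [h.mk_eq, dyadicVal_two_mul_succ], fun i => ?_, fun j => ?_⟩
  · calc (⟦z.moveLeft i⟧ : Game) ≤ dyadicVal (k - 1) q := h.moveLeft_le i
      _ = dyadicVal (2 * (k - 1)) (q + 1) := (dyadicVal_two_mul_succ _ _).symm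
      _ ≤ dyadicVal (2 * k - 1) (q + 1) := dyadicVal_le_dyadicVal_iff.2 (by omega)
  · calc dyadicVal (2 * k + 1) (q + 1) ≤ dyadicVal (2 * (k + 1)) (q + 1) :=
          dyadicVal_le_dyadicVal_iff.2 (by omega)
      _ = dyadicVal (k + 1) q := dyadicVal_two_mul_succ _ _
      _ ≤ ⟦z.moveRight j⟧ := h.le_moveRight j

theorem mk_ball_add_self {u v : PGame.{u}} {j : ℤ} {q : ℕ} (hu : IsDyadicForm u j q)
    (hv : IsDyadicForm v (j + 1) q) :
    (⟦ball u v⟧ : Game) + ⟦ball u v⟧ = ⟦u⟧ + ⟦v⟧ := by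
  have hB := numeric_ball hu.numeric hv.numeric
    (mk_lt_mk.1 (by rw [hu.mk_eq, hv.mk_eq]; exact dyadicVal_lt_dyadicVal_iff.2 (by omega)))
  have huB := mk_lt_mk_ball hB
  have hBv := mk_ball_lt_mk hB
  have hBB : (⟦u⟧ : Game) + ⟦u⟧ < ⟦ball u v⟧ + ⟦ball u v⟧ := add_lt_add huB huB
  rw [← mk_add, ← mk_add]
  refine mk_eq_of_le_of_le
    (add_le_add_iff_forall_lf.2 ⟨⟨fun _ => ?_, fun _ => ?_⟩, fun k => ?_, fun k => ?_⟩)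
    (add_le_add_iff_forall_lf.2 ⟨⟨fun i => ?_, fun i => ?_⟩, fun _ => ?_, fun _ => ?_⟩)
    <;> refine lf_of_mk_lt ?_ <;> simp only [mk_add, ball_moveLeft, ball_moveRight]
  · exact add_lt_add_right hBv _
  · rw [add_comm]; exact add_lt_add_right hBv _
  · exact add_lt_add (hBv.trans_le (hv.mk_eq ▸ hu.le_moveRight k)) hBv
  · calc (⟦ball u v⟧ : Game) + ⟦ball u v⟧ < ⟦v⟧ + ⟦v⟧ := add_lt_add hBv hBv
      _ = ⟦u⟧ + dyadicVal (j + 1 + 1) q := by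
        rw [hu.mk_eq, hv.mk_eq, dyadicVal_add, dyadicVal_add]; ring_nf
      _ ≤ ⟦u⟧ + ⟦v.moveRight k⟧ := add_le_add le_rfl (hv.le_moveRight k)
  · refine lt_of_le_of_lt ?_ hBB
    calc (⟦u.moveLeft i⟧ : Game) + ⟦v⟧ ≤ dyadicVal (j - 1) q + ⟦v⟧ :=
          add_le_add (hu.moveLeft_le i) le_rfl
      _ = ⟦u⟧ + ⟦u⟧ := by rw [hu.mk_eq, hv.mk_eq, dyadicVal_add, dyadicVal_add]; ring_nf
  · refine lt_of_le_of_lt (add_le_add le_rfl ?_) hBB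
    rw [hu.mk_eq]; simpa using hv.moveLeft_le i
  · rw [add_comm]; exact add_lt_add_right huB _
  · exact add_lt_add_left huB _

theorem ball {u v : PGame.{u}} {j : ℤ} {q : ℕ} (hu : IsDyadicForm u j q)
    (hv : IsDyadicForm v (j + 1) q) : IsDyadicForm (ball u v) (2 * j + 1) (q + 1) := by
  have hB := numeric_ball hu.numeric hv.numeric
    (mk_lt_mk.1 (by rw [hu.mk_eq, hv.mk_eq]; exact dyadicVal_lt_dyadicVal_iff.2 (by omega)))
  refine ⟨hB, Game.eq_of_add_self_eq_add_self (mk_mem_numbers hB) (dyadicVal_mem_numbers _ _) ?_,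
    fun _ => ?_, fun _ => ?_⟩
  · rw [hu.mk_ball_add_self hv, hu.mk_eq, hv.mk_eq, dyadicVal_add, dyadicVal_add,
      show 2 * j + 1 + (2 * j + 1) = 2 * (j + (j + 1)) by ring, dyadicVal_two_mul_succ]
  · rw [add_sub_cancel_right, dyadicVal_two_mul_succ, ← hu.mk_eq]; rfl
  · rw [show 2 * j + 1 + 1 = 2 * (j + 1) by ring, dyadicVal_two_mul_succ, ← hv.mk_eq]; rfl

end IsDyadicForm

theorem exists_isDyadicForm (k : ℤ) (q : ℕ) : ∃ z : PGame.{u}, IsDyadicForm z k q := by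
  induction q generalizing k with
  | zero =>
    obtain ⟨n, rfl | rfl⟩ := Int.eq_nat_or_neg k
    · exact ⟨canonNat n, isDyadicForm_canonNat n⟩
    · exact ⟨-canonNat n, (isDyadicForm_canonNat n).neg⟩
  | succ q ih =>
    obtain ⟨j, rfl | rfl⟩ := Int.even_or_odd' k
    · obtain ⟨z, hz⟩ := ih j
      exact ⟨z, hz.double⟩
    · obtain ⟨u, hu⟩ := ih j
      obtain ⟨v, hv⟩ := ih (j + 1)
      exact ⟨ball u v, hu.ball hv⟩

theorem exists_nat_mk_ball_eq {x y : PGame.{u}} (hx : x.Numeric) (n : ℕ)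
    (hxn : ⟦x⟧ < dyadicVal n 0) (hny : dyadicVal n 0 < ⟦y⟧) :
    ∃ m : ℕ, m ≤ n ∧ (⟦ball x y⟧ : Game) = dyadicVal m 0 := by
  classical
  -- The least natural number `m > x` is the simplest number in `(x, y)`.
  have hex : ∃ m : ℕ, (⟦x⟧ : Game) < dyadicVal m 0 := ⟨n, hxn⟩
  obtain ⟨m, hxm, hmn, hmin⟩ : ∃ m : ℕ, (⟦x⟧ : Game) < dyadicVal m 0 ∧ m ≤ n ∧
      ∀ m' < m, ¬(⟦x⟧ : Game) < dyadicVal m' 0 :=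
    ⟨Nat.find hex, Nat.find_spec hex, Nat.find_min' hex hxn, fun _ => Nat.find_min hex⟩
  have hm := isDyadicForm_canonNat.{u} m
  have hL : ∀ i, (canonNat m).moveLeft i ≤ x := by
    cases m with
    | zero => exact nofun
    | succ m =>
      intro _
      rw [canonNat_succ_moveLeft, ← mk_le_mk, (isDyadicForm_canonNat m).mk_eq]
      exact (le_or_gt_of_mem_numbers (dyadicVal_mem_numbers _ _) (mk_mem_numbers hx)).resolve_right
        (hmin m m.lt_succ_self)
  have hR : ∀ j, y ≤ (canonNat m).moveRight j := by
    cases m <;> exact nofun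
  have hmy : dyadicVal m 0 < ⟦y⟧ :=
    (dyadicVal_le_dyadicVal_iff.2 (by exact_mod_cast hmn)).trans_lt hny
  rw [← hm.mk_eq] at hxm hmy
  exact ⟨m, hmn, (mk_ball_eq_of_lf hL hR (lf_of_mk_lt hxm) (lf_of_mk_lt hmy)).trans hm.mk_eq⟩

theorem exists_int_mk_ball_eq {x y : PGame.{u}} (hx : x.Numeric) (hy : y.Numeric) (n : ℤ)
    (hxn : ⟦x⟧ < dyadicVal n 0) (hny : dyadicVal n 0 < ⟦y⟧) :
    ∃ m : ℤ, m.natAbs ≤ n.natAbs ∧ (⟦ball x y⟧ : Game) = dyadicVal m 0 := by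
  obtain ⟨n, rfl | rfl⟩ := Int.eq_nat_or_neg n
  · obtain ⟨m, hmn, hm⟩ := exists_nat_mk_ball_eq hx n hxn hny
    exact ⟨m, by omega, hm⟩
  · obtain ⟨m, hmn, hm⟩ := exists_nat_mk_ball_eq hy.neg n
      (by rwa [mk_neg, neg_lt, dyadicVal_neg]) (by rwa [mk_neg, lt_neg, dyadicVal_neg])
    rw [ball_neg, mk_neg, neg_eq_iff_eq_neg, dyadicVal_neg] at hm
    exact ⟨-m, by omega, hm⟩

theorem mk_ball_eq_dyadicVal_succ {x y : PGame.{u}} (hx : x.Numeric) (hy : y.Numeric) {k : ℤ}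
    {s : ℕ} (hxk : ⟦x⟧ < dyadicVal k (s + 1)) (hky : dyadicVal k (s + 1) < ⟦y⟧)
    (hcoarse : ¬∃ j : ℤ, ⟦x⟧ < dyadicVal j s ∧ dyadicVal j s < ⟦y⟧) :
    (⟦ball x y⟧ : Game) = dyadicVal k (s + 1) := by
  obtain ⟨j, rfl | rfl⟩ := Int.even_or_odd' k
  · rw [dyadicVal_two_mul_succ] at hxk hky
    exact absurd ⟨j, hxk, hky⟩ hcoarse
  -- `k = 2 j + 1`, and the neighbours `j / 2 ^ s`, `(j + 1) / 2 ^ s` lie outside `(x, y)`.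
  obtain ⟨u, hu⟩ := exists_isDyadicForm.{u} j s
  obtain ⟨v, hv⟩ := exists_isDyadicForm.{u} (j + 1) s
  have hux : (⟦u⟧ : Game) ≤ ⟦x⟧ := by
    refine (le_or_gt_of_mem_numbers (mk_mem_numbers hu.numeric) (mk_mem_numbers hx)).resolve_right
      fun hxu => hcoarse ⟨j, hu.mk_eq ▸ hxu, lt_trans ?_ hky⟩
    rw [← dyadicVal_two_mul_succ j, dyadicVal_lt_dyadicVal_iff]
    omega
  have hyv : (⟦y⟧ : Game) ≤ ⟦v⟧ := by
    refine (le_or_gt_of_mem_numbers (mk_mem_numbers hy) (mk_mem_numbers hv.numeric)).resolve_right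
      fun hvy => hcoarse ⟨j + 1, lt_trans hxk ?_, hv.mk_eq ▸ hvy⟩
    rw [← dyadicVal_two_mul_succ (j + 1), dyadicVal_lt_dyadicVal_iff]
    omega
  have hB := hu.ball hv
  rw [← hB.mk_eq] at hxk hky ⊢
  exact mk_ball_eq_of_lf (fun _ => mk_le_mk.1 hux) (fun _ => mk_le_mk.1 hyv) (lf_of_mk_lt hxk)
    (lf_of_mk_lt hky)

theorem exists_mk_ball_eq_dyadicVal {x y : PGame.{u}} (hx : x.Numeric) (hy : y.Numeric) {k : ℤ}
    {q : ℕ} (hxk : ⟦x⟧ < dyadicVal k q) (hky : dyadicVal k q < ⟦y⟧) :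
    ∃ k' : ℤ, ∃ q' ≤ q, (⟦ball x y⟧ : Game) = dyadicVal k' q' := by
  induction q generalizing k with
  | zero =>
    obtain ⟨m, -, hm⟩ := exists_int_mk_ball_eq hx hy k hxk hky
    exact ⟨m, 0, le_rfl, hm⟩
  | succ s ih =>
    by_cases hcoarse : ∃ j : ℤ, ⟦x⟧ < dyadicVal j s ∧ dyadicVal j s < ⟦y⟧
    · obtain ⟨j, hxj, hjy⟩ := hcoarse
      obtain ⟨k', q', hq', h⟩ := ih hxj hjy
      exact ⟨k', q', hq'.trans s.le_succ, h⟩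
    · exact ⟨k, s + 1, le_rfl, mk_ball_eq_dyadicVal_succ hx hy hxk hky hcoarse⟩

theorem dyadicVal_sub_one_le_of_mk_ball_eq_int {x y : PGame.{u}} (hx : x.Numeric)
    (hy : y.Numeric) (hG : (ball x y).Numeric)
    (hbal : (⟦ball x y⟧ : Game) + ⟦ball x y⟧ = ⟦x⟧ + ⟦y⟧) {a : ℤ} (ha : a ≠ 0)
    (hval : (⟦ball x y⟧ : Game) = dyadicVal a 0) : dyadicVal (a - 1) 0 ≤ ⟦x⟧ := by
  refine (le_or_gt_of_mem_numbers (dyadicVal_mem_numbers _ _) (mk_mem_numbers hx)).resolve_right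
    fun hxa => ?_
  -- `a - 1` (if `a > 0`) or `a + 1` (if `a < 0`) is an integer in `(x, y)` closer to `0` than `a`.
  obtain ⟨n, hn, hxn, hny⟩ : ∃ n : ℤ, n.natAbs < a.natAbs ∧ ⟦x⟧ < dyadicVal n 0 ∧
      dyadicVal n 0 < ⟦y⟧ := by
    rcases ha.lt_or_gt with hneg | hpos
    · refine ⟨a + 1, by omega, hxa.trans (dyadicVal_lt_dyadicVal_iff.2 (by omega)), ?_⟩
      have hy_eq : (⟦y⟧ : Game) = dyadicVal a 0 + dyadicVal a 0 - ⟦x⟧ := by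
        rw [← hval, hbal, add_sub_cancel_left]
      calc dyadicVal (a + 1) 0 = dyadicVal a 0 + dyadicVal a 0 - dyadicVal (a - 1) 0 := by
            rw [dyadicVal_add, dyadicVal_sub]; ring_nf
        _ < ⟦y⟧ := hy_eq ▸ sub_lt_sub_left hxa _
    · exact ⟨a - 1, by omega, hxa,
        (dyadicVal_lt_dyadicVal_iff.2 (by omega)).trans (hval ▸ mk_ball_lt_mk hG)⟩
  obtain ⟨m, hm, hGm⟩ := exists_int_mk_ball_eq hx hy n hxn hny
  have hma : m = a := by simpa using dyadicVal_eq_dyadicVal_iff.1 (hGm.symm.trans hval)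
  omega

theorem dyadicVal_sub_one_le_of_mk_ball_eq_odd {x y : PGame.{u}} (hx : x.Numeric)
    (hy : y.Numeric) (hG : (ball x y).Numeric) {a : ℤ} {s : ℕ} (ha : Odd a)
    (hval : (⟦ball x y⟧ : Game) = dyadicVal a (s + 1)) : dyadicVal (a - 1) (s + 1) ≤ ⟦x⟧ := by
  refine (le_or_gt_of_mem_numbers (dyadicVal_mem_numbers _ _) (mk_mem_numbers hx)).resolve_right
    fun hxa => ?_
  obtain ⟨b, rfl⟩ := ha
  rw [show 2 * b + 1 - 1 = 2 * b by ring, dyadicVal_two_mul_succ] at hxa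
  have hby : dyadicVal b s < ⟦y⟧ := by
    rw [← dyadicVal_two_mul_succ]
    exact (dyadicVal_lt_dyadicVal_iff.2 (by omega)).trans (hval ▸ mk_ball_lt_mk hG)
  obtain ⟨k, q, hq, hGk⟩ := exists_mk_ball_eq_dyadicVal hx hy hxa hby
  exact dyadicVal_ne_of_lt_of_odd (Nat.lt_succ_of_le hq) ⟨b, rfl⟩ (hGk.symm.trans hval)

theorem radius_le_canonical_radius_general (x y : PGame) (hx : x.Numeric) (hy : y.Numeric)
    (hG : (ball x y).Numeric)
    (hbal : (⟦ball x y⟧ : Game) + ⟦ball x y⟧ = ⟦x⟧ + ⟦y⟧)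
    (a : ℤ) (p : ℕ) (ha : (p = 0 ∧ a ≠ 0) ∨ (1 ≤ p ∧ Odd a))
    (hval : (⟦ball x y⟧ : Game) = dyadicVal a p) :
    (⟦y⟧ : Game) - ⟦x⟧ ≤ dyadicVal 2 p := by
  have hax : dyadicVal (a - 1) p ≤ ⟦x⟧ := by
    rcases ha with ⟨rfl, ha0⟩ | ⟨hp, hodd⟩
    · exact dyadicVal_sub_one_le_of_mk_ball_eq_int hx hy hG hbal ha0 hval
    · obtain ⟨s, rfl⟩ := Nat.exists_eq_add_of_le' hp
      exact dyadicVal_sub_one_le_of_mk_ball_eq_odd hx hy hG hodd hval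
  calc (⟦y⟧ : Game) - ⟦x⟧ = dyadicVal a p + dyadicVal a p - ⟦x⟧ - ⟦x⟧ := by
        rw [← hval, hbal, add_sub_cancel_left]
    _ ≤ dyadicVal a p + dyadicVal a p - dyadicVal (a - 1) p - dyadicVal (a - 1) p := by gcongr
    _ = dyadicVal 2 p := by rw [dyadicVal_add, dyadicVal_sub, dyadicVal_sub]; ring_nf

/-- A balanced ball `⟨x | y⟩` of nonzero value `a / 2 ^ p` (with `a` a nonzero integer if
`p = 0`, and `a` odd if `p ≥ 1`) has `y − x ≤ 2 / 2 ^ p` as values; equivalently its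
radius `Δ` satisfies `−1/2^p ≤ Δ < 0`. -/
theorem radius_le_canonical_radius (x y : PGame) (hx : x.Numeric) (hy : y.Numeric)
    (hG : (ball x y).Numeric) (hxy : x < y)
    (hbal : (⟦ball x y⟧ : Game) + ⟦ball x y⟧ = ⟦x⟧ + ⟦y⟧)
    (a : ℤ) (p : ℕ) (ha : (p = 0 ∧ a ≠ 0) ∨ (1 ≤ p ∧ Odd a))
    (hval : (⟦ball x y⟧ : Game) = dyadicVal a p) :
    (⟦y⟧ : Game) - ⟦x⟧ ≤ dyadicVal 2 p :=
  radius_le_canonical_radius_general x y hx hy hG hbal a p ha hval
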